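/- Define L : ℕ → ℕ by L(1) = 1 and L(K+1) = (K choose (K-1)) · L(K) + 2 · ∑_{i=0}^{K-2} (K choose i) · L(i+1) · L(K-i) for K ≥ 1, and let B : ℕ → ℕ satisfy B(1) = B(2) = 1 and B(K+1) = (2K-1)·B(K). Then for all K ≥ 3, L(K) ≥ B(K); i.e., the number of all tree hierarchies dominates the number of binary hierarchies. -/

import Mathlib

/-!
Splitting a binary hierarchy at its root gives the convolution identity
`∑_{0<j<n} C(n,j) B(j) B(n-j) = 2 B(n)`, and together with `B(k+1) + B(k) = 2k B(k)` and the
symmetry `j ↔ n - j` it yields `∑_{i<K} C(K,i) B(i+1) B(K-i) = B(K+1)`. Dropping the term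
`i = K-1`, the sum in the recurrence of `L`, evaluated on `B`, is `(K-1) B(K)`. The recurrence
of `L` is monotone in the earlier values, so by induction
`L(K+1) ≥ K B(K) + 2 (K-1) B(K) ≥ (2K-1) B(K) = B(K+1)`.
-/

open Finset

theorem two_mul_sum_range_sub_mul_of_reflect {f : ℕ → ℕ} {m : ℕ}
    (hf : ∀ i < m, f (m - 1 - i) = f i) :
    2 * ∑ i ∈ range m, (m - i) * f i = (m + 1) * ∑ i ∈ range m, f i := by
  have hreflect : ∑ i ∈ range m, (m - i) * f i = ∑ i ∈ range m, (i + 1) * f i := by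
    rw [← sum_range_reflect]
    refine sum_congr rfl fun i hi => ?_
    have hi := mem_range.mp hi
    rw [hf i hi, show m - (m - 1 - i) = i + 1 by omega]
  rw [two_mul]
  nth_rewrite 2 [hreflect]
  rw [mul_sum, ← sum_add_distrib]
  refine sum_congr rfl fun i hi => ?_
  rw [← add_mul, show m - i + (i + 1) = m + 1 by have := mem_range.mp hi; omega]

section BinaryHierarchies

variable (B : ℕ → ℕ)

theorem sum_range_choose_succ_mul_eq (n : ℕ) :
    ∑ i ∈ range n, n.choose (i + 1) * B (i + 1) * B (n - i) =
      ∑ i ∈ range n, n.choose i * B (i + 1) * B (n - i) := by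
  rw [← sum_range_reflect]
  refine sum_congr rfl fun i hi => ?_
  have hi := mem_range.mp hi
  rw [show n - 1 - i + 1 = n - i by omega, show n - (n - 1 - i) = i + 1 by omega,
    Nat.choose_symm_of_eq_add (show n = n - i + i by omega)]
  ring

theorem sum_range_choose_succ_succ_mul_eq (m : ℕ) :
    ∑ i ∈ range m, (m + 1).choose (i + 1) * B (i + 1) * B (m - i) =
      2 * ∑ i ∈ range m, m.choose i * B (i + 1) * B (m - i) := by
  simp only [Nat.choose_succ_succ, add_mul, sum_add_distrib, sum_range_choose_succ_mul_eq]
  ring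

variable {B}

theorem add_eq_two_mul_of_succ_eq (hB : ∀ k, 1 ≤ k → B (k + 1) = (2 * k - 1) * B k) {k : ℕ}
    (hk : 1 ≤ k) : B (k + 1) + B k = 2 * k * B k := by
  rw [hB k hk]
  nth_rewrite 2 [← one_mul (B k)]
  rw [← add_mul, Nat.sub_add_cancel (by omega)]

/-- Pascal's rule turns the hypothesis into the convolution identity `∑ t = 2 B(m+1)`;
symmetrizing the weights `B(m+1-i) = (2(m-i)-1) B(m-i)` under `i ↦ m-1-i` gives the conclusion. -/
theorem sum_range_choose_mul_succ_eq_succ (hB1 : B 1 = 1)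
    (hB : ∀ k, 1 ≤ k → B (k + 1) = (2 * k - 1) * B k) {m : ℕ}
    (hm : ∑ i ∈ range m, m.choose i * B (i + 1) * B (m - i) = B (m + 1)) :
    ∑ i ∈ range (m + 1), (m + 1).choose i * B (i + 1) * B (m + 1 - i) = B (m + 2) := by
  set t : ℕ → ℕ := fun i => (m + 1).choose (i + 1) * B (i + 1) * B (m - i) with ht
  have ht_sum : ∑ i ∈ range m, t i = 2 * B (m + 1) := by
    rw [ht, sum_range_choose_succ_succ_mul_eq, hm]
  have ht_reflect : ∀ i < m, t (m - 1 - i) = t i := fun i hi => by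
    simp only [ht, show m - 1 - i + 1 = m - i by omega, show m - (m - 1 - i) = i + 1 by omega,
      Nat.choose_symm_of_eq_add (show m + 1 = m - i + (i + 1) by omega)]
    ring
  have hrest : ∑ i ∈ range m, (m + 1).choose (i + 1) * B (i + 1) * B (m + 1 - i) +
      ∑ i ∈ range m, t i = 2 * ∑ i ∈ range m, (m - i) * t i := by
    rw [← sum_add_distrib, mul_sum]
    refine sum_congr rfl fun i hi => ?_
    have hi := mem_range.mp hi
    have := add_eq_two_mul_of_succ_eq hB (k := m - i) (by omega)
    rw [show m - i + 1 = m + 1 - i by omega] at this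
    simp only [ht]
    linear_combination (m + 1).choose (i + 1) * B (i + 1) * this
  rw [← sum_range_choose_succ_mul_eq, sum_range_succ, Nat.choose_self, Nat.add_sub_cancel_left,
    hB1, hB (m + 1) (by omega)]
  rw [two_mul_sum_range_sub_mul_of_reflect ht_reflect, ht_sum] at hrest
  rw [show 2 * (m + 1) - 1 = 2 * m + 1 by omega]
  linarith

theorem sum_range_choose_mul_succ_eq (hB1 : B 1 = 1)
    (hB : ∀ k, 1 ≤ k → B (k + 1) = (2 * k - 1) * B k) {n : ℕ} (hn : 1 ≤ n) :
    ∑ i ∈ range n, n.choose i * B (i + 1) * B (n - i) = B (n + 1) := by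
  induction n, hn using Nat.le_induction with
  | base => simp [hB1, hB 1 le_rfl]
  | succ m _ ih => exact sum_range_choose_mul_succ_eq_succ hB1 hB ih

theorem sum_range_pred_choose_mul_eq (hB1 : B 1 = 1)
    (hB : ∀ k, 1 ≤ k → B (k + 1) = (2 * k - 1) * B k) {n : ℕ} (hn : 1 ≤ n) :
    ∑ i ∈ range (n - 1), n.choose i * B (i + 1) * B (n - i) = (n - 1) * B n := by
  have h := sum_range_choose_mul_succ_eq hB1 hB hn
  rw [← Nat.sub_add_cancel hn, sum_range_succ, Nat.sub_add_cancel hn, hB n hn,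
    ← Nat.choose_symm_of_eq_add (show n = 1 + (n - 1) by omega), Nat.choose_one_right,
    show n - (n - 1) = 1 by omega, hB1, show 2 * n - 1 = (n - 1) + n by omega] at h
  linarith

end BinaryHierarchies

theorem binary_le_succ_of_le {L B : ℕ → ℕ} (hB1 : B 1 = 1)
    (hB : ∀ k, 1 ≤ k → B (k + 1) = (2 * k - 1) * B k) {K : ℕ} (hK : 1 ≤ K)
    (hLK : L (K + 1) = K.choose (K - 1) * L K +
        2 * ∑ i ∈ range (K - 1), K.choose i * L (i + 1) * L (K - i))
    (hle : ∀ j, 1 ≤ j → j ≤ K → B j ≤ L j) :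
    B (K + 1) ≤ L (K + 1) := by
  have hsum : ∑ i ∈ range (K - 1), K.choose i * B (i + 1) * B (K - i) ≤
      ∑ i ∈ range (K - 1), K.choose i * L (i + 1) * L (K - i) := by
    refine sum_le_sum fun i hi => ?_
    have hi := mem_range.mp hi
    gcongr <;> apply hle <;> omega
  calc B (K + 1) = (2 * K - 1) * B K := hB K hK
    _ ≤ (K + 2 * (K - 1)) * B K := by gcongr; omega
    _ = K * B K + 2 * ((K - 1) * B K) := by ring
    _ ≤ K.choose (K - 1) * L K +
          2 * ∑ i ∈ range (K - 1), K.choose i * L (i + 1) * L (K - i) := by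
        rw [← sum_range_pred_choose_mul_eq hB1 hB hK,
          ← Nat.choose_symm_of_eq_add (show K = 1 + (K - 1) by omega), Nat.choose_one_right]
        gcongr
        exact hle K hK le_rfl
    _ = L (K + 1) := hLK.symm

theorem L_dominates_binary (L B : ℕ → ℕ) (h1 : L 1 = 1)
    (hrec : ∀ K : ℕ, 1 ≤ K → L (K + 1) =
      K.choose (K - 1) * L K +
        2 * ∑ i ∈ Finset.range (K - 1), K.choose i * L (i + 1) * L (K - i))
    (hB1 : B 1 = 1) (hB2 : B 2 = 1)
    (hBrec : ∀ K : ℕ, 2 ≤ K → B (K + 1) = (2 * K - 1) * B K) :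
    ∀ K : ℕ, 3 ≤ K → B K ≤ L K := by
  have hB : ∀ k, 1 ≤ k → B (k + 1) = (2 * k - 1) * B k := fun k hk => by
    rcases hk.eq_or_lt with rfl | hk
    · simp [hB1, hB2]
    · exact hBrec k hk
  have hle : ∀ K, 1 ≤ K → B K ≤ L K := by
    intro K
    induction K using Nat.strong_induction_on with
    | _ K ih =>
      intro hK
      obtain rfl | ⟨n, hn, rfl⟩ : K = 1 ∨ ∃ n, 1 ≤ n ∧ K = n + 1 :=
        hK.eq_or_lt.imp Eq.symm fun h => ⟨K - 1, by omega, by omega⟩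
      · simp [hB1, h1]
      · exact binary_le_succ_of_le hB1 hB hn (hrec n hn) fun j hj hjn => ih j (by omega) hj
  exact fun K hK => hle K (by omega)
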